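/- Under the mirroring strategy (Player 2 responds to Player 1 placing a ball of color c in bin (a,b) by placing a ball of the opposite color in bin (-a,b)), Player 2's prescribed move is always legal: the required ball of the opposite color is available and bin (-a,b) is not full. -/

import Mathlib

/-- Bins labeled by pairs `(a,b)` with `a ∈ {+1,-1}` (encoded as `Bool`)
and `b ∈ {1,…,j}` (encoded as `Fin j`). -/
abbrev BinB (j : ℕ) := Bool × Fin j

/-- A move: a color (`true` = white, `false` = black) and a bin. -/
abbrev MoveB (j : ℕ) := Bool × BinB j

/-- A strategy: given the history of moves (most recent first), produce a move. -/
abbrev StratB (j : ℕ) := List (MoveB j) → MoveB j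

/-- The mirror of a move: the opposite color, in the paired bin `(-a,b)`. -/
def mirror (j : ℕ) (mv : MoveB j) : MoveB j := (!mv.1, (!mv.2.1, mv.2.2))

/-- `s2` is the mirroring (pairing) strategy: whenever the last move was `mv`,
it plays the opposite color in the paired bin. -/
def IsMirror (j : ℕ) (s2 : StratB j) : Prop :=
  ∀ (mv : MoveB j) (h : List (MoveB j)), s2 (mv :: h) = mirror j mv

/-- The history after `n` moves, Player 1 moving at even steps. -/
def histB (j : ℕ) (s1 s2 : StratB j) : ℕ → List (MoveB j)
  | 0 => []
  | n+1 =>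
      (if n % 2 = 0 then s1 (histB j s1 s2 n) else s2 (histB j s1 s2 n)) :: histB j s1 s2 n

/-- A move `mv` is legal after history `h`: a ball of that color remains
(there are `j*(2*m+1)` balls of each color) and the chosen bin is not full
(capacity `2*m+1`). -/
def legalMoveB (j m : ℕ) (h : List (MoveB j)) (mv : MoveB j) : Prop :=
  h.countP (fun x => x.1 == mv.1) < j * (2*m+1) ∧
  h.countP (fun x => x.2 == mv.2) < 2*m+1

/-- Number of white balls in bin `p` according to history `h`. -/
def whitesInB (j : ℕ) (h : List (MoveB j)) (p : BinB j) : ℕ :=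
  h.countP (fun x => x.1 == true && x.2 == p)

/-- Number of black balls in bin `p` according to history `h`. -/
def blacksInB (j : ℕ) (h : List (MoveB j)) (p : BinB j) : ℕ :=
  h.countP (fun x => x.1 == false && x.2 == p)

/-! After each of Player 2's replies the history is a union of pairs `{x, mirror x}`, i.e. a
permutation of its own image under the involution `mirror`. Hence any count over it is unchanged
by composing the predicate with `mirror`: each color is as frequent as the other, and each bin
`(a,b)` as full as `(-a,b)`. A legal move `x` of Player 1 neither uses the opposite color nor
enters the paired bin, so the counts that Player 2's reply `mirror x` needs equal the counts for
the color and bin of `x` before `x`, which were below capacity. -/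

theorem mirror_mirror (j : ℕ) (mv : MoveB j) : mirror j (mirror j mv) = mv := by
  simp [mirror]

theorem histB_two_mul_add_one (j : ℕ) (s1 s2 : StratB j) (k : ℕ) :
    histB j s1 s2 (2 * k + 1) = s1 (histB j s1 s2 (2 * k)) :: histB j s1 s2 (2 * k) := by
  simp [histB]

theorem histB_two_mul_add_two (j : ℕ) (s1 s2 : StratB j) (hs2 : IsMirror j s2) (k : ℕ) :
    histB j s1 s2 (2 * k + 2) =
      mirror j (s1 (histB j s1 s2 (2 * k))) ::
        s1 (histB j s1 s2 (2 * k)) :: histB j s1 s2 (2 * k) := by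
  rw [histB, if_neg (by omega), histB_two_mul_add_one, hs2]

theorem histB_two_mul_perm_map_mirror (j : ℕ) (s1 s2 : StratB j) (hs2 : IsMirror j s2)
    (k : ℕ) : (histB j s1 s2 (2 * k)).Perm ((histB j s1 s2 (2 * k)).map (mirror j)) := by
  induction k with
  | zero => simp [histB]
  | succ k ih =>
    rw [Nat.mul_succ, histB_two_mul_add_two j s1 s2 hs2, List.map_cons, List.map_cons,
      mirror_mirror]
    exact (ih.cons _).cons _ |>.trans (.swap _ _ _)

theorem List.countP_eq_countP_comp_of_perm_map {α : Type*} {l : List α} {f : α → α}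
    (hl : l.Perm (l.map f)) (p : α → Bool) : l.countP p = l.countP (p ∘ f) := by
  rw [hl.countP_eq, List.countP_map]

theorem legalMoveB_cons_mirror {j m : ℕ} {h : List (MoveB j)} {mv : MoveB j}
    (hh : h.Perm (h.map (mirror j))) (hmv : legalMoveB j m h mv) :
    legalMoveB j m (mv :: h) (mirror j mv) := by
  obtain ⟨hcolor, hbin⟩ := hmv
  have hcolor_mirror : (fun x : MoveB j => x.1 == (mirror j mv).1) ∘ mirror j =
      fun x => x.1 == mv.1 := by
    funext x; simp [mirror]
  have hbin_mirror : (fun x : MoveB j => x.2 == (mirror j mv).2) ∘ mirror j =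
      fun x => x.2 == mv.2 := by
    funext ⟨_, b, _⟩; cases b <;> cases mv.2.1 <;> simp [mirror, Prod.ext_iff]
  constructor
  · rw [List.countP_cons, List.countP_eq_countP_comp_of_perm_map hh, hcolor_mirror]
    simpa [mirror] using hcolor
  · rw [List.countP_cons, List.countP_eq_countP_comp_of_perm_map hh, hbin_mirror]
    simpa [mirror, Prod.ext_iff] using hbin

theorem mirror_always_legal_general (j m : ℕ)
    (s1 s2 : StratB j) (hs2 : IsMirror j s2)
    (h1 : ∀ n < 2*j*(2*m+1), n % 2 = 0 →
      legalMoveB j m (histB j s1 s2 n) (s1 (histB j s1 s2 n))) :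
    ∀ n < 2*j*(2*m+1), n % 2 = 1 →
      legalMoveB j m (histB j s1 s2 n) (s2 (histB j s1 s2 n)) := by
  intro n hn hodd
  obtain ⟨k, rfl⟩ : ∃ k, n = 2 * k + 1 := ⟨n / 2, by omega⟩
  rw [histB_two_mul_add_one, hs2]
  exact legalMoveB_cons_mirror (histB_two_mul_perm_map_mirror j s1 s2 hs2 k)
    (h1 (2 * k) (by omega) (by omega))

/-- Under the mirroring strategy, Player 2's prescribed move
is always legal: at every odd step, if Player 1 has played legally at all
even steps so far, then the mirror move (opposite color, paired bin) is legal,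
i.e. the required ball is available and the paired bin is not full. -/
theorem mirror_always_legal (j m : ℕ) (hj : 0 < j)
    (s1 s2 : StratB j) (hs2 : IsMirror j s2)
    (h1 : ∀ n < 2*j*(2*m+1), n % 2 = 0 →
      legalMoveB j m (histB j s1 s2 n) (s1 (histB j s1 s2 n))) :
    ∀ n < 2*j*(2*m+1), n % 2 = 1 →
      legalMoveB j m (histB j s1 s2 n) (s2 (histB j s1 s2 n)) :=
  mirror_always_legal_general j m s1 s2 hs2 h1
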